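/- arXiv:1702.08011 — 2 statements merged into one kernel-verified Lean document; each statement's English description precedes it below -/
import Mathlib

section
/- The deconcatenation coproduct Δ(α) = Σ_{α=β·γ} β⊗γ is an algebra homomorphism with respect to the quasi-shuffle product: Δ(α * β) = Δ(α) * Δ(β), where the product on the tensor square is componentwise quasi-shuffle. -/
/-- The quasi-shuffle product of two words over a commutative monoid `B`,
valued in the free `k`-module on words:
`∅*α = α*∅ = α` and `(a,α)*(b,β) = (a, α*(b,β)) + (b, (a,α)*β) + (a+b, α*β)`. -/
noncomputable def qs (k : Type*) [CommRing k] {B : Type*} [AddCommMonoid B] :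
    List B → List B → (List B →₀ k)
  | [], β => Finsupp.single β 1
  | α, [] => Finsupp.single α 1
  | a :: α, b :: β =>
      Finsupp.mapDomain (List.cons a) (qs k α (b :: β)) +
      Finsupp.mapDomain (List.cons b) (qs k (a :: α) β) +
      Finsupp.mapDomain (List.cons (a + b)) (qs k α β)
  termination_by α β => α.length + β.length

/-- The bilinear extension of the quasi-shuffle product to the free module. -/
noncomputable def qsMul {k : Type*} [CommRing k] {B : Type*} [AddCommMonoid B]
    (f g : List B →₀ k) : List B →₀ k :=
  f.sum fun α c => g.sum fun β d => (c * d) • qs k α β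

/-- The deconcatenation coproduct of a word, with the tensor square of the free
module on words modeled as the free module on pairs of words. -/
noncomputable def deconcat (k : Type*) [CommRing k] {B : Type*} (α : List B) :
    (List B × List B) →₀ k :=
  ∑ i ∈ Finset.range (α.length + 1), Finsupp.single (α.take i, α.drop i) 1

/-- The tensor product `f ⊗ g` of two elements of the free module on words,
modeled in the free module on pairs of words. -/
noncomputable def fprod {k : Type*} [CommRing k] {B : Type*}
    (f g : List B →₀ k) : (List B × List B) →₀ k :=
  f.sum fun a c => g.sum fun b d => (c * d) • Finsupp.single (a, b) 1

/-!
Both sides satisfy the recursion defining the quasi-shuffle product. Since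
`Δ(c γ) = 1 ⊗ c γ + (c ⊗ 1) · Δ(γ)`, where `(c ⊗ 1) ·` prepends `c` to the left factor,
the linear extension of `Δ` turns the recursion for `a α * b β` into
`Δ(a α * b β) =
  1 ⊗ (a α * b β) + (a ⊗ 1) Δ(α * b β) + (b ⊗ 1) Δ(a α * β) + ((a + b) ⊗ 1) Δ(α * β)`.
On the other side `Δ(α) * Δ(β) = ∑ (α₁ * β₁) ⊗ (α₂ * β₂)` over all splittings `α = α₁ α₂`,
`β = β₁ β₂`: the summand with `α₁ = β₁ = ∅` is `1 ⊗ (a α * b β)`, and the others, expanded by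
the recursion for `α₁ * β₁`, regroup into the three remaining terms. Induction on `|α| + |β|`
concludes.
-/

open Finset

def consFst {B : Type*} (a : B) (p : List B × List B) : List B × List B :=
  (a :: p.1, p.2)

theorem Finset.sum_range_succ_sum_range_succ {M : Type*} [AddCommMonoid M] (f : ℕ → ℕ → M)
    (m n : ℕ) :
    ∑ i ∈ range (m + 1), ∑ j ∈ range (n + 1), f i j =
      f 0 0 + ∑ j ∈ range n, f 0 (j + 1) + ∑ i ∈ range m, f (i + 1) 0 +
        ∑ i ∈ range m, ∑ j ∈ range n, f (i + 1) (j + 1) := by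
  simp only [sum_range_succ' _ m, sum_range_succ' _ n, sum_add_distrib]
  abel

section Deconcat

variable {k : Type*} [CommRing k] {B : Type*}

theorem fprod_add_left (f₁ f₂ g : List B →₀ k) :
    fprod (f₁ + f₂) g = fprod f₁ g + fprod f₂ g := by
  unfold fprod
  refine Finsupp.sum_add_index' (by simp) fun a c₁ c₂ => ?_
  rw [← Finsupp.sum_add]
  simp [add_mul, add_smul]

theorem fprod_single_left (x : List B) (c : k) (g : List B →₀ k) :
    fprod (Finsupp.single x c) g = c • Finsupp.mapDomain (Prod.mk x) g := by
  unfold fprod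
  rw [Finsupp.sum_single_index (by simp), Finsupp.mapDomain, Finsupp.smul_sum]
  refine Finsupp.sum_congr fun b _ => ?_
  simp [Finsupp.smul_single, mul_comm]

theorem fprod_mapDomain_cons_left (a : B) (f g : List B →₀ k) :
    fprod (Finsupp.mapDomain (List.cons a) f) g =
      Finsupp.mapDomain (consFst a) (fprod f g) := by
  induction f using Finsupp.induction_linear with
  | zero => simp [fprod]
  | add f₁ f₂ h₁ h₂ =>
    rw [Finsupp.mapDomain_add, fprod_add_left, h₁, h₂, fprod_add_left, Finsupp.mapDomain_add]
  | single x c =>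
    rw [Finsupp.mapDomain_single, fprod_single_left, fprod_single_left, Finsupp.mapDomain_smul,
      ← Finsupp.mapDomain_comp]
    rfl

theorem deconcat_cons (a : B) (γ : List B) :
    deconcat k (a :: γ) =
      Finsupp.single ([], a :: γ) 1 + Finsupp.mapDomain (consFst a) (deconcat k γ) := by
  rw [deconcat, deconcat, Finsupp.mapDomain_finsetSum, List.length_cons, sum_range_succ',
    add_comm]
  simp only [Finsupp.mapDomain_single, List.take_succ_cons, List.drop_succ_cons, List.take_zero,
    List.drop_zero, consFst]

variable (k) in
noncomputable def deconcatLin : (List B →₀ k) →ₗ[k] (List B × List B) →₀ k :=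
  Finsupp.linearCombination k (deconcat k)

theorem deconcatLin_apply (f : List B →₀ k) :
    deconcatLin k f = f.sum fun γ c => c • deconcat k γ :=
  Finsupp.linearCombination_apply k f

theorem deconcatLin_mapDomain_cons (a : B) (f : List B →₀ k) :
    deconcatLin k (Finsupp.mapDomain (List.cons a) f) =
      Finsupp.mapDomain (Prod.mk []) (Finsupp.mapDomain (List.cons a) f) +
        Finsupp.mapDomain (consFst a) (deconcatLin k f) := by
  induction f using Finsupp.induction_linear with
  | zero => simp
  | add f₁ f₂ h₁ h₂ =>
    simp only [Finsupp.mapDomain_add, map_add, h₁, h₂]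
    abel
  | single x c =>
    rw [Finsupp.mapDomain_single, Finsupp.mapDomain_single, deconcatLin,
      Finsupp.linearCombination_single, Finsupp.linearCombination_single, deconcat_cons, smul_add,
      Finsupp.mapDomain_smul, Finsupp.smul_single, smul_eq_mul, mul_one]

end Deconcat

section QuasiShuffle

variable {k : Type*} [CommRing k] {B : Type*} [AddCommMonoid B]

theorem qs_nil_left (β : List B) : qs k [] β = Finsupp.single β 1 := by
  cases β <;> rw [qs]

theorem qs_nil_right (α : List B) : qs k α [] = Finsupp.single α 1 := by
  cases α <;> rw [qs]
  exact List.cons_ne_nil _ _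

theorem qs_cons_cons (a b : B) (α β : List B) :
    qs k (a :: α) (b :: β) = Finsupp.mapDomain (List.cons a) (qs k α (b :: β)) +
      Finsupp.mapDomain (List.cons b) (qs k (a :: α) β) +
      Finsupp.mapDomain (List.cons (a + b)) (qs k α β) := by
  rw [qs]

theorem qs_nil_cons (b : B) (β : List B) :
    qs k [] (b :: β) = Finsupp.mapDomain (List.cons b) (qs k [] β) := by
  rw [qs_nil_left, qs_nil_left, Finsupp.mapDomain_single]

theorem qs_cons_nil (a : B) (α : List B) :
    qs k (a :: α) [] = Finsupp.mapDomain (List.cons a) (qs k α []) := by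
  rw [qs_nil_right, qs_nil_right, Finsupp.mapDomain_single]

variable (k) in
/-- The summand `(α₁ * β₁) ⊗ (α₂ * β₂)` of `Δ(α) * Δ(β)` for the splittings of `α` after `i`
letters and of `β` after `j` letters. -/
noncomputable def splitTerm (α β : List B) (i j : ℕ) : (List B × List B) →₀ k :=
  fprod (qs k (α.take i) (β.take j)) (qs k (α.drop i) (β.drop j))

theorem splitTerm_zero_zero (α β : List B) :
    splitTerm k α β 0 0 = Finsupp.mapDomain (Prod.mk []) (qs k α β) := by
  rw [splitTerm, List.take_zero, List.take_zero, List.drop_zero, List.drop_zero, qs_nil_left,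
    fprod_single_left, one_smul]

theorem splitTerm_zero_succ (α : List B) (b : B) (β : List B) (j : ℕ) :
    splitTerm k α (b :: β) 0 (j + 1) = Finsupp.mapDomain (consFst b) (splitTerm k α β 0 j) := by
  simp only [splitTerm, List.take_zero, List.drop_zero, List.take_succ_cons, List.drop_succ_cons,
    qs_nil_cons, fprod_mapDomain_cons_left]

theorem splitTerm_succ_zero (a : B) (α β : List B) (i : ℕ) :
    splitTerm k (a :: α) β (i + 1) 0 = Finsupp.mapDomain (consFst a) (splitTerm k α β i 0) := by
  simp only [splitTerm, List.take_zero, List.drop_zero, List.take_succ_cons, List.drop_succ_cons,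
    qs_cons_nil, fprod_mapDomain_cons_left]

theorem splitTerm_succ_succ (a b : B) (α β : List B) (i j : ℕ) :
    splitTerm k (a :: α) (b :: β) (i + 1) (j + 1) =
      Finsupp.mapDomain (consFst a) (splitTerm k α (b :: β) i (j + 1)) +
        Finsupp.mapDomain (consFst b) (splitTerm k (a :: α) β (i + 1) j) +
        Finsupp.mapDomain (consFst (a + b)) (splitTerm k α β i j) := by
  simp only [splitTerm, List.take_succ_cons, List.drop_succ_cons, qs_cons_cons, fprod_add_left,
    fprod_mapDomain_cons_left]

variable (k) in
noncomputable def deconcatMul (α β : List B) : (List B × List B) →₀ k :=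
  ∑ i ∈ range (α.length + 1), ∑ j ∈ range (β.length + 1), splitTerm k α β i j

theorem deconcatMul_nil_left (β : List B) : deconcatMul k [] β = deconcat k β := by
  simp [deconcatMul, deconcat, splitTerm, qs_nil_left, fprod_single_left]

theorem deconcatMul_nil_right (α : List B) : deconcatMul k α [] = deconcat k α := by
  simp [deconcatMul, deconcat, splitTerm, qs_nil_right, fprod_single_left]

theorem deconcatMul_cons_cons (a b : B) (α β : List B) :
    deconcatMul k (a :: α) (b :: β) =
      Finsupp.mapDomain (Prod.mk []) (qs k (a :: α) (b :: β)) +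
        Finsupp.mapDomain (consFst a) (deconcatMul k α (b :: β)) +
        Finsupp.mapDomain (consFst b) (deconcatMul k (a :: α) β) +
        Finsupp.mapDomain (consFst (a + b)) (deconcatMul k α β) := by
  simp only [deconcatMul, List.length_cons, sum_range_succ_sum_range_succ, splitTerm_zero_zero,
    splitTerm_zero_succ, splitTerm_succ_zero, splitTerm_succ_succ,
    sum_range_succ' _ (β.length + 1), sum_range_succ' _ (α.length + 1),
    Finsupp.mapDomain_finsetSum, Finsupp.mapDomain_add, sum_add_distrib]
  abel

theorem deconcatLin_qs (α β : List B) : deconcatLin k (qs k α β) = deconcatMul k α β :=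
  match α, β with
  | [], β => by
    rw [qs_nil_left, deconcatLin, Finsupp.linearCombination_single, one_smul,
      deconcatMul_nil_left]
  | a :: α, [] => by
    rw [qs_nil_right, deconcatLin, Finsupp.linearCombination_single, one_smul,
      deconcatMul_nil_right]
  | a :: α, b :: β => by
    rw [deconcatMul_cons_cons, ← deconcatLin_qs α (b :: β), ← deconcatLin_qs (a :: α) β,
      ← deconcatLin_qs α β, qs_cons_cons, map_add, map_add, deconcatLin_mapDomain_cons,
      deconcatLin_mapDomain_cons, deconcatLin_mapDomain_cons, Finsupp.mapDomain_add,
      Finsupp.mapDomain_add]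
    abel
  termination_by α.length + β.length

theorem deconcat_sum_sum_eq_deconcatMul (α β : List B) :
    ((deconcat k α).sum fun p c => (deconcat k β).sum fun q d =>
      (c * d) • fprod (qs k p.1 q.1) (qs k p.2 q.2)) = deconcatMul k α β := by
  rw [deconcat, deconcatMul, ← Finsupp.sum_finsetSum_index (by simp) fun p c₁ c₂ => by
    simp only [add_mul, add_smul, Finsupp.sum_add]]
  refine sum_congr rfl fun i _ => ?_
  rw [Finsupp.sum_single_index (by simp), deconcat,
    ← Finsupp.sum_finsetSum_index (by simp) fun q d₁ d₂ => by rw [mul_add, add_smul]]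
  refine sum_congr rfl fun j _ => ?_
  rw [Finsupp.sum_single_index (by simp), one_mul, one_smul, splitTerm]

end QuasiShuffle

/-- The deconcatenation coproduct is multiplicative with respect to the
quasi-shuffle product: `Δ(α * β) = Δ(α) * Δ(β)`, where the product on the
tensor square is the componentwise quasi-shuffle product. -/
theorem stmt_9 (k : Type*) [CommRing k] {B : Type*} [AddCommMonoid B]
    (α β : List B) :
    ((qs k α β).sum fun γ c => c • deconcat k γ) =
    ((deconcat k α).sum fun p c => (deconcat k β).sum fun q d =>
      (c * d) • fprod (qs k p.1 q.1) (qs k p.2 q.2)) := by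
  rw [← deconcatLin_apply, deconcatLin_qs, deconcat_sum_sum_eq_deconcatMul]
end

section
/- In the quasi-shuffle Hopf algebra of words over Ñ∖{0}, the antipode of the word ε^n (n copies of ε) is S(ε^n) = (−1)^n Σ_{i=0}^{n−1} C(n−1,i) · ε^{i+1}. -/
/-- The antipode of the quasi-shuffle Hopf algebra:
`S(α) = (−1)^{ℓ(α)} ∑_{J ⊨ ℓ(α)} J∘(α^r)`. -/
noncomputable def qsAntipode (k : Type*) [CommRing k] {B : Type*} [AddCommMonoid B]
    (α : List B) : List B →₀ k :=
  (-1 : k) ^ α.length •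
    ∑ J : Composition α.length,
      Finsupp.single ((α.reverse.splitWrtComposition J).map List.sum) 1

open Finset

theorem List.map_sum_splitWrtComposition_eq_replicate_zero {M : Type*} [AddMonoid M] {l : List M}
    (hl : ∀ x ∈ l, x = 0) (c : Composition l.length) :
    (l.splitWrtComposition c).map List.sum = List.replicate c.length 0 := by
  refine List.eq_replicate_iff.mpr ⟨by simp, ?_⟩
  simp only [List.mem_map, forall_exists_index, and_imp, forall_apply_eq_imp_iff₂]
  intro b hb
  refine List.sum_eq_zero fun x hx => hl x ?_
  rw [← l.flatten_splitWrtComposition c]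
  exact List.mem_flatten.mpr ⟨b, hb, hx⟩

theorem CompositionAsSet.card_boundaries_compositionAsSetEquiv_symm {n : ℕ} (hn : n ≠ 0)
    (s : Finset (Fin (n - 1))) :
    ((compositionAsSetEquiv n).symm s).boundaries.card = s.card + 2 := by
  have hshift : Function.Injective fun j : Fin (n - 1) => (Fin.castLE (n.sub_le 1) j).succ :=
    fun i j h => by simpa [Fin.ext_iff] using h
  have hb : ((compositionAsSetEquiv n).symm s).boundaries =
      insert 0 (insert (Fin.last n) (s.map ⟨_, hshift⟩)) := by
    ext i
    simp only [compositionAsSetEquiv, Equiv.coe_fn_symm_mk, Set.toFinset_ofPred, mem_filter_univ,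
      mem_insert, mem_map, Function.Embedding.coeFn_mk, exists_prop, Fin.ext_iff (a := Fin.succ _),
      Fin.val_succ, Fin.val_castLE, eq_comm (a := (i : ℕ))]
  rw [hb, card_insert_of_notMem, card_insert_of_notMem, card_map]
  · simp [Fin.ext_iff]; omega
  · simp [Fin.ext_iff]; omega

theorem Composition.sum_apply_length {M : Type*} [AddCommMonoid M] {n : ℕ} (hn : n ≠ 0)
    (f : ℕ → M) :
    ∑ c : Composition n, f c.length = ∑ i ∈ range n, (n - 1).choose i • f (i + 1) := by
  let e := (compositionEquiv n).trans (compositionAsSetEquiv n)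
  have hlength (s : Finset (Fin (n - 1))) : (e.symm s).length = s.card + 1 := by
    have := CompositionAsSet.card_boundaries_compositionAsSetEquiv_symm hn s
    simp only [e, Equiv.symm_trans_apply, compositionEquiv, Equiv.coe_fn_symm_mk,
      CompositionAsSet.toComposition_length, CompositionAsSet.length]
    omega
  calc ∑ c : Composition n, f c.length
      = ∑ s ∈ (univ : Finset (Fin (n - 1))).powerset, f (s.card + 1) := by
        rw [powerset_univ]
        exact (Fintype.sum_equiv e.symm _ _ fun s => by rw [hlength]).symm
    _ = ∑ i ∈ range n, (n - 1).choose i • f (i + 1) := by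
        rw [sum_powerset_apply_card (fun i => f (i + 1)), card_univ, Fintype.card_fin,
          Nat.sub_add_cancel (Nat.one_le_iff_ne_zero.mpr hn)]

-- Words over `Ñ∖{0}` are encoded as words over `(ℕ, +)`, with `ε` as `0`.
/-- In the quasi-shuffle Hopf algebra of words over `Ñ∖{0}` (identified with
`(ℕ,+)` via `θ`, so `ε` is `0`), the antipode of the word `ε^n` is
`S(ε^n) = (−1)^n ∑_{i=0}^{n−1} C(n−1,i) ε^{i+1}`. -/
theorem stmt_16 (k : Type*) [CommRing k] (n : ℕ) (hn : 0 < n) :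
    qsAntipode k (List.replicate n (0 : ℕ)) =
      (-1 : k) ^ n • ∑ i ∈ Finset.range n,
        ((n - 1).choose i : k) • Finsupp.single (List.replicate (i + 1) (0 : ℕ)) 1 := by
  have hzero : ∀ x ∈ List.replicate n (0 : ℕ), x = 0 := fun _ => List.eq_of_mem_replicate
  simp only [qsAntipode, List.reverse_replicate,
    List.map_sum_splitWrtComposition_eq_replicate_zero hzero]
  rw [List.length_replicate,
    Composition.sum_apply_length hn.ne' fun i => Finsupp.single (List.replicate i (0 : ℕ)) (1 : k)]
  simp only [Nat.cast_smul_eq_nsmul]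
end
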